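/- Let X be a compact topological space, μ a finite Borel measure on X, and f : X → ℝ a continuous nonnegative function. Then the supremum, over all finite rational sequences 0 = r₀ < r₁ < ⋯ < r_n (n ≥ 1), of the lower sums Σ_{i=1}^{n} (r_i − r_{i−1})·μ{x ∈ X : f(x) > r_i}, equals the infimum, over all finite rational sequences 0 = r₀ < r₁ < ⋯ < r_n (n ≥ 1) with f(x) < r_n for all x ∈ X, of the upper sums Σ_{i=1}^{n} (r_i − r_{i−1})·μ{x ∈ X : f(x) ≥ r_{i−1}}. (Locatedness of the two-sided integral: the lower and upper integrals of f against μ coincide.) -/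

import Mathlib

open MeasureTheory Set Finset

lemma chain_le {n : ℕ} {r : ℕ → ℚ} (hr : ∀ i < n, r i < r (i + 1)) : r 0 ≤ r n := by
  induction n with
  | zero => exact le_rfl
  | succ k ih =>
      exact (ih fun i hi => hr i (hi.trans k.lt_succ_self)).trans (hr k k.lt_succ_self).le

lemma sum_le_intervalIntegral (g : ℝ → ℝ) (hg : Antitone g) (n : ℕ) (r : ℕ → ℝ)
    (hr : ∀ i < n, r i ≤ r (i + 1)) :
    ∑ i ∈ Finset.range n, (r (i + 1) - r i) * g (r (i + 1)) ≤ ∫ t in (r 0)..(r n), g t := by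
  rw [← intervalIntegral.sum_integral_adjacent_intervals
      (fun i _ => hg.intervalIntegrable (μ := volume) (a := r i) (b := r (i+1)))]
  apply Finset.sum_le_sum
  intro i hi
  have hab := hr i (Finset.mem_range.mp hi)
  have h1 : (r (i+1) - r i) * g (r (i+1)) = ∫ _ in (r i)..(r (i+1)), g (r (i+1)) := by
    rw [intervalIntegral.integral_const, smul_eq_mul]
  rw [h1]
  exact intervalIntegral.integral_mono_on hab intervalIntegrable_const hg.intervalIntegrable
    (fun x hx => hg hx.2)

lemma intervalIntegral_le_sum (g : ℝ → ℝ) (hg : Antitone g) (n : ℕ) (r : ℕ → ℝ)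
    (hr : ∀ i < n, r i ≤ r (i + 1)) :
    (∫ t in (r 0)..(r n), g t) ≤ ∑ i ∈ Finset.range n, (r (i + 1) - r i) * g (r i) := by
  rw [← intervalIntegral.sum_integral_adjacent_intervals
      (fun i _ => hg.intervalIntegrable (μ := volume) (a := r i) (b := r (i+1)))]
  apply Finset.sum_le_sum
  intro i hi
  have hab := hr i (Finset.mem_range.mp hi)
  have h1 : (r (i+1) - r i) * g (r i) = ∫ _ in (r i)..(r (i+1)), g (r i) := by
    rw [intervalIntegral.integral_const, smul_eq_mul]
  rw [h1]
  exact intervalIntegral.integral_mono_on hab hg.intervalIntegrable intervalIntegrable_const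
    (fun x hx => hg hx.1)

/-- Locatedness of the two-sided integral: for a compact space `X`, a finite Borel
measure `μ`, and a continuous nonnegative `f : X → ℝ`, the supremum of the lower
(Choquet) sums `Σ (rᵢ - rᵢ₋₁) * μ {f > rᵢ}` over rational partitions
`0 = r₀ < r₁ < ⋯ < r_n` (`n ≥ 1`) equals the infimum of the upper sums
`Σ (rᵢ - rᵢ₋₁) * μ {f ≥ rᵢ₋₁}` over such partitions with `f < r_n` everywhere. -/
theorem lower_integral_eq_upper_integral
    {X : Type*} [TopologicalSpace X] [CompactSpace X]
    [MeasurableSpace X] [BorelSpace X]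
    (μ : Measure X) [IsFiniteMeasure μ]
    (f : X → ℝ) (hf : Continuous f) (hf0 : ∀ x, 0 ≤ f x) :
    sSup {s : ℝ | ∃ (n : ℕ) (r : ℕ → ℚ), 1 ≤ n ∧ r 0 = 0 ∧
        (∀ i < n, r i < r (i + 1)) ∧
        s = ∑ i ∈ Finset.range n,
          ((r (i + 1) : ℝ) - (r i : ℝ)) * (μ {x | (r (i + 1) : ℝ) < f x}).toReal} =
    sInf {s : ℝ | ∃ (n : ℕ) (r : ℕ → ℚ), 1 ≤ n ∧ r 0 = 0 ∧
        (∀ i < n, r i < r (i + 1)) ∧ (∀ x, f x < (r n : ℝ)) ∧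
        s = ∑ i ∈ Finset.range n,
          ((r (i + 1) : ℝ) - (r i : ℝ)) * (μ {x | (r i : ℝ) ≤ f x}).toReal} := by
  set G : ℝ → ℝ := fun t => (μ {x | t < f x}).toReal with hGdef
  set H : ℝ → ℝ := fun t => (μ {x | t ≤ f x}).toReal with hHdef
  set L : Set ℝ := {s : ℝ | ∃ (n : ℕ) (r : ℕ → ℚ), 1 ≤ n ∧ r 0 = 0 ∧
        (∀ i < n, r i < r (i + 1)) ∧
        s = ∑ i ∈ Finset.range n, ((r (i + 1) : ℝ) - (r i : ℝ)) * G ((r (i+1) : ℝ))} with hLdef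
  set U : Set ℝ := {s : ℝ | ∃ (n : ℕ) (r : ℕ → ℚ), 1 ≤ n ∧ r 0 = 0 ∧
        (∀ i < n, r i < r (i + 1)) ∧ (∀ x, f x < (r n : ℝ)) ∧
        s = ∑ i ∈ Finset.range n, ((r (i + 1) : ℝ) - (r i : ℝ)) * H ((r i : ℝ))} with hUdef
  have hGanti : Antitone G := by
    intro s t hst
    exact ENNReal.toReal_mono (measure_ne_top μ _)
      (measure_mono fun x hx => lt_of_le_of_lt hst hx)
  have hHanti : Antitone H := by
    intro s t hst
    exact ENNReal.toReal_mono (measure_ne_top μ _)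
      (measure_mono fun x hx => le_trans hst hx)
  have hGH : ∀ t, G t ≤ H t := fun t =>
    ENNReal.toReal_mono (measure_ne_top μ _) (measure_mono fun x (hx : t < f x) => le_of_lt hx)
  have hG0 : ∀ t, 0 ≤ G t := fun t => ENNReal.toReal_nonneg
  -- an upper bound for f
  obtain ⟨M, hM⟩ : ∃ M : ℝ, ∀ x, f x < M := by
    obtain ⟨B, hB⟩ := (isCompact_range hf).bddAbove
    exact ⟨B + 1, fun x => lt_of_le_of_lt (hB ⟨x, rfl⟩) (lt_add_one B)⟩
  -- key inequality: every element of L is ≤ every element of U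
  have key : ∀ a ∈ L, ∀ b ∈ U, a ≤ b := by
    rintro a ⟨n, r, hn, hr0, hrmono, rfl⟩ b ⟨m, q, hm, hq0, hqmono, hqtop, rfl⟩
    have hrn0 : (0:ℝ) ≤ (r n : ℝ) := by
      have := chain_le hrmono; rw [hr0] at this; exact_mod_cast this
    have hqm0 : (0:ℝ) ≤ (q m : ℝ) := by
      have := chain_le hqmono; rw [hq0] at this; exact_mod_cast this
    have h1 : (∑ i ∈ Finset.range n, ((r (i + 1) : ℝ) - (r i : ℝ)) * G ((r (i+1) : ℝ)))
        ≤ ∫ t in (0:ℝ)..((r n : ℝ)), G t := by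
      have := sum_le_intervalIntegral G hGanti n (fun i => (r i : ℝ))
        (fun i hi => by exact_mod_cast (hrmono i hi).le)
      simpa [hr0] using this
    have h2 : (∫ t in (0:ℝ)..((q m : ℝ)), H t)
        ≤ ∑ i ∈ Finset.range m, ((q (i + 1) : ℝ) - (q i : ℝ)) * H ((q i : ℝ)) := by
      have := intervalIntegral_le_sum H hHanti m (fun i => (q i : ℝ))
        (fun i hi => by exact_mod_cast (hqmono i hi).le)
      simpa [hq0] using this
    refine le_trans h1 (le_trans ?_ h2)
    -- ∫_0^{rn} G ≤ ∫_0^{qm} H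
    set c : ℝ := max ((r n : ℝ)) ((q m : ℝ)) with hcdef
    have hc0 : (0:ℝ) ≤ c := le_trans hrn0 (le_max_left _ _)
    have s1 : (∫ t in (0:ℝ)..((r n : ℝ)), G t) ≤ ∫ t in (0:ℝ)..c, G t :=
      intervalIntegral.integral_mono_interval le_rfl hrn0 (le_max_left _ _)
        (Filter.Eventually.of_forall fun t => hG0 t) hGanti.intervalIntegrable
    have s2 : (∫ t in (0:ℝ)..c, G t) ≤ ∫ t in (0:ℝ)..c, H t :=
      intervalIntegral.integral_mono_on hc0 hGanti.intervalIntegrable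
        hHanti.intervalIntegrable (fun t _ => hGH t)
    have s3 : (∫ t in (0:ℝ)..c, H t) = ∫ t in (0:ℝ)..((q m : ℝ)), H t := by
      have hzero : ∀ t ∈ Set.uIcc ((q m : ℝ)) c, H t = 0 := by
        intro t ht
        rw [Set.uIcc_of_le (le_max_right _ _)] at ht
        have hempty : {x | t ≤ f x} = ∅ := by
          ext x; simp only [Set.mem_setOf_eq, Set.mem_empty_iff_false, iff_false, not_le]
          exact lt_of_lt_of_le (hqtop x) ht.1
        simp [hHdef, hempty]
      have h4 : (∫ t in ((q m : ℝ))..c, H t) = 0 := by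
        rw [intervalIntegral.integral_congr hzero]; simp
      rw [← intervalIntegral.integral_add_adjacent_intervals
        (hHanti.intervalIntegrable (a := (0:ℝ)) (b := (q m : ℝ)))
        (hHanti.intervalIntegrable (a := ((q m : ℝ))) (b := c)), h4, add_zero]
    linarith [s1, s2]
  -- nonemptiness
  have hLne : L.Nonempty := by
    refine ⟨(1:ℝ) * G 1, 1, (fun i => (i : ℚ)), le_rfl, by simp, ?_, by simp⟩
    intro i hi
    simp only []; exact_mod_cast Nat.lt_succ_self i
  have hUne : U.Nonempty := by
    obtain ⟨p, hp⟩ := exists_rat_gt M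
    set p' : ℚ := max p 1 with hp'def
    have hp'pos : (0:ℚ) < p' := lt_of_lt_of_le one_pos (le_max_right _ _)
    refine ⟨_, 1, (fun i => (i : ℚ) * p'), le_rfl, by simp, ?_, ?_, rfl⟩
    · intro i hi
      have : (i:ℚ) < (i:ℚ) + 1 := lt_add_one _
      calc (i:ℚ) * p' < ((i:ℚ)+1) * p' := by
            exact mul_lt_mul_of_pos_right this hp'pos
        _ = ((i+1:ℕ):ℚ) * p' := by push_cast; ring
    · intro x
      have : f x < M := hM x
      have hpM : M < (p' : ℝ) := lt_of_lt_of_le hp (by exact_mod_cast le_max_left p 1)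
      calc f x < M := hM x
        _ < (p' : ℝ) := hpM
        _ = (((1:ℕ):ℚ) * p' : ℚ) := by push_cast; ring
  have hbddL : BddAbove L := by
    obtain ⟨b, hb⟩ := hUne
    exact ⟨b, fun a ha => key a ha b hb⟩
  have hbddU : BddBelow U := by
    obtain ⟨a, ha⟩ := hLne
    exact ⟨a, fun b hb => key a ha b hb⟩
  refine le_antisymm (csSup_le hLne fun a ha => le_csInf hUne fun b hb => key a ha b hb) ?_
  -- sInf U ≤ sSup L: via ε-close pairs
  refine le_of_forall_pos_le_add ?_
  intro ε hε
  set K : ℝ := (μ Set.univ).toReal with hKdef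
  have hK0 : 0 ≤ K := ENNReal.toReal_nonneg
  obtain ⟨δ, hδ0, hδε⟩ : ∃ δ : ℚ, 0 < (δ:ℝ) ∧ (δ:ℝ) * (2 * K + 1) < ε := by
    obtain ⟨δ, h1, h2⟩ := exists_rat_btwn (show (0:ℝ) < ε / (2*K+1) from
      div_pos hε (by linarith))
    refine ⟨δ, h1, ?_⟩
    rw [lt_div_iff₀ (by linarith)] at h2
    exact h2
  have hδQ : (0:ℚ) < δ := by exact_mod_cast hδ0
  obtain ⟨k, hk⟩ := exists_nat_gt (M / (δ:ℝ))
  set n : ℕ := k + 2 with hndef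
  set r : ℕ → ℚ := fun i => (i:ℚ) * δ with hrdef
  have hrcast : ∀ i : ℕ, ((r i : ℝ)) = (i:ℝ) * (δ:ℝ) := by
    intro i; simp [hrdef]
  have hstep : ∀ i : ℕ, ((r (i+1) : ℝ)) - ((r i : ℝ)) = (δ:ℝ) := by
    intro i; rw [hrcast, hrcast]; push_cast; ring
  have hr0 : r 0 = 0 := by simp [hrdef]
  have hrmono : ∀ i < n, r i < r (i + 1) := by
    intro i _
    have : (i:ℚ) < (i:ℚ) + 1 := lt_add_one _
    calc (i:ℚ) * δ < ((i:ℚ)+1) * δ := mul_lt_mul_of_pos_right this hδQ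
      _ = ((i+1:ℕ):ℚ) * δ := by push_cast; ring
  have hrtop : ∀ x, f x < ((r n : ℝ)) := by
    intro x
    have hMk : M < (k:ℝ) * (δ:ℝ) := (div_lt_iff₀ hδ0).mp hk
    have : (k:ℝ) * (δ:ℝ) ≤ ((n:ℝ)) * (δ:ℝ) := by
      apply mul_le_mul_of_nonneg_right _ hδ0.le
      exact_mod_cast Nat.le_add_right k 2
    rw [hrcast]
    exact lt_of_lt_of_le (lt_trans (hM x) hMk) this
  set a : ℝ := ∑ i ∈ Finset.range n, ((r (i + 1) : ℝ) - (r i : ℝ)) * G ((r (i+1) : ℝ))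
    with hadef
  set b : ℝ := ∑ i ∈ Finset.range n, ((r (i + 1) : ℝ) - (r i : ℝ)) * H ((r i : ℝ))
    with hbdef
  have haL : a ∈ L := ⟨n, r, by omega, hr0, hrmono, rfl⟩
  have hbU : b ∈ U := ⟨n, r, by omega, hr0, hrmono, hrtop, rfl⟩
  have hb' : b = ∑ i ∈ Finset.range n, (δ:ℝ) * H ((r i : ℝ)) :=
    Finset.sum_congr rfl fun i _ => by rw [hstep]
  have ha' : a = ∑ i ∈ Finset.range n, (δ:ℝ) * G ((r (i+1) : ℝ)) :=
    Finset.sum_congr rfl fun i _ => by rw [hstep]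
  have hsplit : b = (∑ i ∈ Finset.range k, (δ:ℝ) * H ((r (i+2) : ℝ)))
      + (δ:ℝ) * H ((r 1 : ℝ)) + (δ:ℝ) * H ((r 0 : ℝ)) := by
    rw [hb', hndef,
      Finset.sum_range_succ' (fun i => (δ:ℝ) * H ((r i : ℝ))) (k+1),
      Finset.sum_range_succ' (fun i => (δ:ℝ) * H ((r (i+1) : ℝ))) k]
  have hterm : ∀ i ∈ Finset.range k, (δ:ℝ) * H ((r (i+2) : ℝ))
      ≤ (δ:ℝ) * G ((r (i+1) : ℝ)) := by
    intro i hi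
    have hik : i < k := Finset.mem_range.mp hi
    apply mul_le_mul_of_nonneg_left _ hδ0.le
    apply ENNReal.toReal_mono (measure_ne_top μ _)
    apply measure_mono
    intro x (hx : ((r (i+2) : ℝ)) ≤ f x)
    have hlt : ((r (i+1) : ℝ)) < ((r (i+2) : ℝ)) := by
      exact_mod_cast hrmono (i+1) (by omega)
    exact lt_of_lt_of_le hlt hx
  have hHK : ∀ t : ℝ, H t ≤ K :=
    fun t => ENNReal.toReal_mono (measure_ne_top μ _) (measure_mono (Set.subset_univ _))
  have hsum_le : (∑ i ∈ Finset.range k, (δ:ℝ) * G ((r (i+1) : ℝ)))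
      ≤ ∑ i ∈ Finset.range n, (δ:ℝ) * G ((r (i+1) : ℝ)) := by
    apply Finset.sum_le_sum_of_subset_of_nonneg
    · exact Finset.range_subset_range.mpr (by omega)
    · intro i _ _; exact mul_nonneg hδ0.le (hG0 _)
  have hba : b ≤ a + ε := by
    have h1 : b ≤ (∑ i ∈ Finset.range k, (δ:ℝ) * G ((r (i+1) : ℝ)))
        + (δ:ℝ) * K + (δ:ℝ) * K := by
      rw [hsplit]
      exact add_le_add (add_le_add (Finset.sum_le_sum hterm)
        (mul_le_mul_of_nonneg_left (hHK _) hδ0.le))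
        (mul_le_mul_of_nonneg_left (hHK _) hδ0.le)
    have h2 : (δ:ℝ) * K + (δ:ℝ) * K < ε := by nlinarith
    rw [ha']
    linarith [hsum_le]
  calc sInf U ≤ b := csInf_le hbddU hbU
    _ ≤ a + ε := hba
    _ ≤ sSup L + ε := by gcongr; exact le_csSup hbddL haL
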